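/- arXiv:2102.00886 — 3 statements merged into one kernel-verified Lean document; each statement's English description precedes it below -/
import Mathlib

section
/- For every real V₀ > 0 and every integer d ≥ 5, the set { (x₁,…,x_d) ∈ (ℝ³)^d : Σ_{1≤m<n≤d} ( ‖x_m‖²·‖x_n‖² − ⟨x_m, x_n⟩² ) < V₀ } has finite Lebesgue measure in ℝ^{3d}. -/
/-!
Let `x` lie in the valley and let `x i` be a longest coordinate, of length `r`. Every other
coordinate `x j` satisfies `‖x j‖ ≤ r` and `‖x i × x j‖² < V₀`, so it lies in a box of length
`2r` along `x i` and width `2√V₀ / r` across it, of volume `O(1 / r)` (and `O(1)` when `r ≤ 1`).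
Hence the valley has measure at most `d · ∫_{ℝ³} O((1 + ‖v‖)^{-(d-1)}) dv`, which is finite
because `d - 1 > 3`.
-/

open MeasureTheory RealInnerProductSpace

section InnerProductSpace

variable {E : Type*} [NormedAddCommGroup E] [InnerProductSpace ℝ E]

-- `‖u × v‖²` when `E = ℝ³`.
noncomputable def pairPotential (u v : E) : ℝ := ‖u‖ ^ 2 * ‖v‖ ^ 2 - ⟪u, v⟫ ^ 2

theorem pairPotential_comm (u v : E) : pairPotential u v = pairPotential v u := by
  rw [pairPotential, pairPotential, real_inner_comm]; ring

theorem pairPotential_nonneg (u v : E) : 0 ≤ pairPotential u v := by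
  have h := abs_real_inner_le_norm u v
  have h' : ⟪u, v⟫ ^ 2 ≤ (‖u‖ * ‖v‖) ^ 2 := by
    rw [← sq_abs]; exact pow_le_pow_left₀ (abs_nonneg _) h 2
  rw [pairPotential]; nlinarith

theorem norm_sq_mul_inner_sq_le_pairPotential {u v : E} (hu : ‖u‖ = 1) (huv : ⟪u, v⟫ = 0)
    (y : E) : ‖v‖ ^ 2 * ⟪u, y⟫ ^ 2 ≤ pairPotential v y := by
  -- Cauchy–Schwarz for `v` and the component of `y` orthogonal to `u`.
  set w := y - ⟪u, y⟫ • u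
  have hvw : ⟪v, w⟫ = ⟪v, y⟫ := by
    rw [inner_sub_right, real_inner_smul_right, real_inner_comm u v, huv, mul_zero, sub_zero]
  have hw : ‖w‖ ^ 2 = ‖y‖ ^ 2 - ⟪u, y⟫ ^ 2 := by
    rw [norm_sub_sq_real, norm_smul, real_inner_smul_right, hu, Real.norm_eq_abs, mul_pow,
      sq_abs, real_inner_comm]
    ring
  have hcs : ⟪v, w⟫ ^ 2 ≤ ‖v‖ ^ 2 * ‖w‖ ^ 2 := by
    rw [← mul_pow, ← sq_abs]
    exact pow_le_pow_left₀ (abs_nonneg _) (abs_real_inner_le_norm v w) 2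
  rw [hvw, hw] at hcs
  rw [pairPotential]; nlinarith

-- Where the other coordinates of a valley point lie when `v` is a longest one.
def valleyFiber (V : ℝ) (v : E) : Set E := {y | ‖y‖ ≤ ‖v‖ ∧ pairPotential v y < V}

theorem abs_inner_le_of_mem_valleyFiber {V : ℝ} {u v y : E} (hu : ‖u‖ = 1)
    (hy : y ∈ valleyFiber V v) : |⟪u, y⟫| ≤ ‖v‖ :=
  calc |⟪u, y⟫| ≤ ‖u‖ * ‖y‖ := abs_real_inner_le_norm u y
    _ ≤ ‖v‖ := by rw [hu, one_mul]; exact hy.1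

theorem norm_mul_abs_inner_le_of_mem_valleyFiber {V : ℝ} {u v y : E} (hu : ‖u‖ = 1)
    (huv : ⟪u, v⟫ = 0) (hy : y ∈ valleyFiber V v) : ‖v‖ * |⟪u, y⟫| ≤ √V := by
  rw [← abs_norm v, ← abs_mul]
  refine Real.abs_le_sqrt ?_
  rw [mul_pow]
  exact (norm_sq_mul_inner_sq_le_pairPotential hu huv y).trans hy.2.le

theorem setOf_sum_pairPotential_lt_subset {ι : Type*} [Fintype ι] [LinearOrder ι] [Nonempty ι]
    (V : ℝ) :
    {x : ι → E | ∑ m, ∑ n, (if m < n then pairPotential (x m) (x n) else 0) < V} ⊆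
      ⋃ i, {x | ∀ j ≠ i, x j ∈ valleyFiber V (x i)} := by
  intro x hx
  have hterm_nonneg : ∀ m n, 0 ≤ if m < n then pairPotential (x m) (x n) else 0 := fun m n => by
    split_ifs
    exacts [pairPotential_nonneg _ _, le_rfl]
  have hpair : ∀ m n, m < n → pairPotential (x m) (x n) < V := fun m n hmn =>
    calc pairPotential (x m) (x n)
        = if m < n then pairPotential (x m) (x n) else 0 := (if_pos hmn).symm
      _ ≤ ∑ n', if m < n' then pairPotential (x m) (x n') else 0 :=
          Finset.single_le_sum (fun n' _ => hterm_nonneg m n') (Finset.mem_univ n)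
      _ ≤ ∑ m', ∑ n', if m' < n' then pairPotential (x m') (x n') else 0 :=
          Finset.single_le_sum (fun m' _ => Finset.sum_nonneg fun n' _ => hterm_nonneg m' n')
            (Finset.mem_univ m)
      _ < V := hx
  obtain ⟨i, hi⟩ := Finite.exists_max fun j => ‖x j‖
  refine Set.mem_iUnion.2 ⟨i, fun j hj => ⟨hi j, ?_⟩⟩
  rcases hj.lt_or_gt with hji | hij
  · rw [pairPotential_comm]; exact hpair j i hji
  · exact hpair i j hij

end InnerProductSpace

theorem OrthonormalBasis.volume_setOf_abs_inner_le {ι F : Type*} [Fintype ι]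
    [NormedAddCommGroup F] [InnerProductSpace ℝ F] [FiniteDimensional ℝ F] [MeasurableSpace F]
    [BorelSpace F] (b : OrthonormalBasis ι ℝ F) (c : ι → ℝ) :
    volume {y : F | ∀ i, |⟪b i, y⟫| ≤ c i} = ∏ i, ENNReal.ofReal (2 * c i) := by
  have hmp := (PiLp.volume_preserving_ofLp ι).comp b.measurePreserving_repr
  have hset : {y : F | ∀ i, |⟪b i, y⟫| ≤ c i} =
      (WithLp.ofLp ∘ b.repr) ⁻¹' Set.univ.pi fun i => Set.Icc (-c i) (c i) := by
    ext y
    simp only [Set.mem_ofPred_eq, Set.mem_preimage, Function.comp_apply, Set.mem_univ_pi,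
      Set.mem_Icc, b.repr_apply_apply, abs_le]
  rw [hset, hmp.measure_preimage
    (MeasurableSet.univ_pi fun _ => measurableSet_Icc).nullMeasurableSet, volume_pi_pi]
  simp only [Real.volume_Icc, sub_neg_eq_add, two_mul]

theorem measurableSet_setOf_mem_valleyFiber {E : Type*} [NormedAddCommGroup E]
    [InnerProductSpace ℝ E] [MeasurableSpace E] [BorelSpace E] [SecondCountableTopology E]
    (V : ℝ) : MeasurableSet {p : E × E | p.2 ∈ valleyFiber V p.1} :=
  (measurableSet_le (f := fun p : E × E => ‖p.2‖) (by fun_prop) (by fun_prop)).inter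
    (measurableSet_lt (f := fun p : E × E => pairPotential p.1 p.2)
      (by unfold pairPotential; fun_prop) measurable_const)

theorem volume_setOf_forall_ne_mem_eq_lintegral {α : Type*} [MeasureSpace α]
    [SigmaFinite (volume : Measure α)] {F : α → Set α}
    (hF : MeasurableSet {p : α × α | p.2 ∈ F p.1}) {n : ℕ} (i : Fin (n + 1)) :
    volume {x : Fin (n + 1) → α | ∀ j ≠ i, x j ∈ F (x i)} = ∫⁻ v, volume (F v) ^ n := by
  set W : Set (α × (Fin n → α)) := {q | ∀ j, q.2 j ∈ F q.1}
  have hW : MeasurableSet W := by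
    have : W = ⋂ j, (fun q : α × (Fin n → α) => (q.1, q.2 j)) ⁻¹' {p | p.2 ∈ F p.1} := by
      ext q; simp [W]
    rw [this]
    exact MeasurableSet.iInter fun j => (by fun_prop : Measurable _) hF
  have hpre : {x : Fin (n + 1) → α | ∀ j ≠ i, x j ∈ F (x i)} =
      MeasurableEquiv.piFinSuccAbove (fun _ => α) i ⁻¹' W := by
    ext x
    simp only [ne_eq, Set.mem_ofPred_eq, MeasurableEquiv.piFinSuccAbove_apply,
      Set.preimage_ofPred_eq, Fin.insertNthEquiv_symm_apply, W]
    exact ⟨fun h j => h _ (Fin.succAbove_ne i j),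
      fun h j hj => by obtain ⟨k, rfl⟩ := Fin.exists_succAbove_eq hj; exact h k⟩
  have hfiber : ∀ v, Prod.mk v ⁻¹' W = Set.univ.pi fun _ : Fin n => F v := by
    intro v; ext z; simp [W]
  rw [hpre, (volume_preserving_piFinSuccAbove (fun _ => α) i).measure_preimage
    hW.nullMeasurableSet, Measure.volume_eq_prod, Measure.prod_apply hW]
  simp_rw [hfiber, volume_pi_pi, Finset.prod_const, Finset.card_univ, Fintype.card_fin]

local notation "ℝ³" => EuclideanSpace ℝ (Fin 3)

theorem exists_orthonormalBasis_apply_zero_eq {u : ℝ³} (hu : ‖u‖ = 1) :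
    ∃ b : OrthonormalBasis (Fin 3) ℝ ℝ³, b 0 = u := by
  have horth : Orthonormal ℝ (Set.domRestrict {(0 : Fin 3)} fun _ => u) :=
    ⟨fun _ => hu, fun i j hij => (hij (Subtype.ext (i.2.trans j.2.symm))).elim⟩
  obtain ⟨b, hb⟩ := horth.exists_orthonormalBasis_extension_of_card_eq (by simp)
  exact ⟨b, hb 0 rfl⟩

theorem volume_valleyFiber_le (V : ℝ) (v : ℝ³) :
    volume (valleyFiber V v) ≤ ENNReal.ofReal (16 * max 1 V * (1 + ‖v‖)⁻¹) := by
  set M := max 1 V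
  have hM : 1 ≤ M := le_max_left 1 V
  have hv : 0 ≤ ‖v‖ := norm_nonneg v
  rcases le_or_gt ‖v‖ 1 with hv1 | hv1
  · let b := EuclideanSpace.basisFun (Fin 3) ℝ
    calc volume (valleyFiber V v) ≤ volume {y : ℝ³ | ∀ i, |⟪b i, y⟫| ≤ 1} :=
          measure_mono fun y hy i =>
            (abs_inner_le_of_mem_valleyFiber (b.orthonormal.1 i) hy).trans hv1
      _ = ENNReal.ofReal (2 * 1) ^ 3 := by
          rw [b.volume_setOf_abs_inner_le, Finset.prod_const, Finset.card_univ, Fintype.card_fin]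
      _ ≤ ENNReal.ofReal (16 * M * (1 + ‖v‖)⁻¹) := by
          rw [← ENNReal.ofReal_pow (by norm_num)]
          refine ENNReal.ofReal_le_ofReal ?_
          rw [← div_eq_mul_inv, le_div_iff₀ (by positivity)]
          nlinarith
  · have hv0 : ‖v‖ ≠ 0 := by positivity
    obtain ⟨b, hb⟩ := exists_orthonormalBasis_apply_zero_eq (u := ‖v‖⁻¹ • v)
      (by rw [norm_smul, norm_inv, norm_norm, inv_mul_cancel₀ hv0])
    have hb_perp : ∀ i ≠ 0, ⟪b i, v⟫ = 0 := fun i hi => by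
      have h : ⟪b i, b 0⟫ = 0 := b.orthonormal.2 hi
      rw [hb, real_inner_smul_right] at h
      exact (mul_eq_zero.1 h).resolve_left (inv_ne_zero hv0)
    let c : Fin 3 → ℝ := ![‖v‖, √M / ‖v‖, √M / ‖v‖]
    calc volume (valleyFiber V v) ≤ volume {y : ℝ³ | ∀ i, |⟪b i, y⟫| ≤ c i} := by
          refine measure_mono fun y hy i => ?_
          by_cases hi : i = 0
          · subst hi; exact abs_inner_le_of_mem_valleyFiber (b.orthonormal.1 0) hy
          · have h :=
              norm_mul_abs_inner_le_of_mem_valleyFiber (b.orthonormal.1 i) (hb_perp i hi) hy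
            have hc : c i = √M / ‖v‖ := by fin_cases i <;> simp_all [c]
            rw [hc, le_div_iff₀ (by positivity), mul_comm]
            exact h.trans (Real.sqrt_le_sqrt (le_max_right 1 V))
      _ = ENNReal.ofReal (2 * ‖v‖ * (2 * (√M / ‖v‖)) * (2 * (√M / ‖v‖))) := by
          have hc : ∀ i, 0 ≤ 2 * c i := fun i => by fin_cases i <;> simp [c] <;> positivity
          rw [b.volume_setOf_abs_inner_le, Fin.prod_univ_three, ← ENNReal.ofReal_mul (hc 0),
            ← ENNReal.ofReal_mul (mul_nonneg (hc 0) (hc 1))]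
          rfl
      _ ≤ ENNReal.ofReal (16 * M * (1 + ‖v‖)⁻¹) := by
          refine ENNReal.ofReal_le_ofReal ?_
          have hsq : √M * √M = M := Real.mul_self_sqrt (by positivity)
          rw [← div_eq_mul_inv, le_div_iff₀ (by positivity)]
          field_simp
          nlinarith

theorem lintegral_volume_valleyFiber_pow_lt_top (V : ℝ) {k : ℕ} (hk : 3 < k) :
    ∫⁻ v : ℝ³, volume (valleyFiber V v) ^ k < ⊤ := by
  set C := (16 * max 1 V) ^ k
  have hbound : ∀ v : ℝ³, volume (valleyFiber V v) ^ k ≤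
      ENNReal.ofReal C * ENNReal.ofReal ((1 + ‖v‖) ^ (-(k : ℝ))) := by
    intro v
    have h1 : 0 ≤ 1 + ‖v‖ := by positivity
    calc volume (valleyFiber V v) ^ k ≤ ENNReal.ofReal (16 * max 1 V * (1 + ‖v‖)⁻¹) ^ k :=
          pow_le_pow_left' (volume_valleyFiber_le V v) k
      _ = ENNReal.ofReal C * ENNReal.ofReal ((1 + ‖v‖) ^ (-(k : ℝ))) := by
          rw [← ENNReal.ofReal_pow (by positivity), ← ENNReal.ofReal_mul (by positivity), mul_pow,
            Real.rpow_neg h1, Real.rpow_natCast, inv_pow]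
  calc ∫⁻ v : ℝ³, volume (valleyFiber V v) ^ k
      ≤ ∫⁻ v : ℝ³, ENNReal.ofReal C * ENNReal.ofReal ((1 + ‖v‖) ^ (-(k : ℝ))) :=
        lintegral_mono hbound
    _ = ENNReal.ofReal C * ∫⁻ v : ℝ³, ENNReal.ofReal ((1 + ‖v‖) ^ (-(k : ℝ))) :=
        lintegral_const_mul' _ _ ENNReal.ofReal_ne_top
    _ < ⊤ := ENNReal.mul_lt_top ENNReal.ofReal_lt_top
        (finite_integral_one_add_norm (by rw [finrank_euclideanSpace_fin]; exact_mod_cast hk))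

theorem su2_valley_finite_volume_general (d : ℕ) (hd : 5 ≤ d) (V₀ : ℝ) :
    volume {x : Fin d → EuclideanSpace ℝ (Fin 3) |
      (∑ m : Fin d, ∑ n : Fin d,
        if m < n then ‖x m‖ ^ 2 * ‖x n‖ ^ 2 - (inner ℝ (x m) (x n) : ℝ) ^ 2 else 0)
        < V₀} < ⊤ := by
  obtain ⟨n, rfl⟩ : ∃ n, d = n + 1 := ⟨d - 1, by omega⟩
  refine (measure_mono (setOf_sum_pairPotential_lt_subset V₀)).trans_lt ?_
  refine (measure_iUnion_fintype_le _ _).trans_lt (ENNReal.sum_lt_top.2 fun i _ => ?_)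
  rw [volume_setOf_forall_ne_mem_eq_lintegral (measurableSet_setOf_mem_valleyFiber V₀) i]
  exact lintegral_volume_valleyFiber_pow_lt_top V₀ (by omega)

/-- For `d ≥ 5`, the valley of the `su(2)` bosonic potential,
written in coordinates `x₁,…,x_d ∈ ℝ³` as
`∑_{m<n} (‖x_m‖²‖x_n‖² − ⟨x_m,x_n⟩²) < V₀`, has finite Lebesgue measure. -/
theorem su2_valley_finite_volume (d : ℕ) (hd : 5 ≤ d) (V₀ : ℝ) (hV₀ : 0 < V₀) :
    volume {x : Fin d → EuclideanSpace ℝ (Fin 3) |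
      (∑ m : Fin d, ∑ n : Fin d,
        if m < n then ‖x m‖ ^ 2 * ‖x n‖ ^ 2 - (inner ℝ (x m) (x n) : ℝ) ^ 2 else 0)
        < V₀} < ⊤ :=
  su2_valley_finite_volume_general d hd V₀
end

section
/- Fix an integer d ≥ 5 and reals V₀ > 0 and ε > 0. For (a, b, z) ∈ ℝ × ℝ^{d−1} × ℂ^{d−1} define V_B(a,b,z) = 8(a² + ‖b‖²)‖z‖² − 8|b·z|² + 2(‖z‖⁴ − |z·z|²), where b·z = Σ_{n=1}^{d−1} b_n z_n, z·z = Σ_{n=1}^{d−1} z_n², ‖z‖² = Σ_{n=1}^{d−1} |z_n|², and ‖b‖² = Σ_{n=1}^{d−1} b_n². Then the integral of the weight a² over the set { (a,b,z) : V_B(a,b,z) < V₀ and 2|a| > ε }, with respect to Lebesgue measure on ℝ × ℝ^{d−1} × ℂ^{d−1} ≅ ℝ^{3(d−1)+1}, is finite. -/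
/-!
Write `V_B = 8 a² ‖z‖² + 8 D(b, z) + 2 (‖z‖⁴ - |z·z|²)` with `D(b, z) = ‖b‖² ‖z‖² - |b·z|²` the
Cauchy–Schwarz defect; all three terms are nonnegative. Hence for `a ≠ 0` the slice `V_B < V₀` lies
in the preimage of `K = {‖z‖² ≤ V₀/8, D(b, z) ≤ V₀/8}` under `(b, z) ↦ (b / a, a z)`, a linear map
of determinant `a^(d-1)`, so it has volume at most `|a|^(1-d) vol K`, and `a² |a|^(1-d)` is
integrable on `{|a| > ε/2}` because `d - 3 > 1`.

`K` has finite volume: for fixed `b ≠ 0` the real and imaginary parts of `z` lie in the ball of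
radius `R = √(V₀/8)` and within distance `R / ‖b‖` of the line `ℝ b`, so the `z`-slice of `K` has
volume `O(min 1 ‖b‖⁻¹ ^ (2(d-2)))`, which is integrable over `b ∈ ℝ^(d-1)` since `2(d-2) > d-1`.
-/

open MeasureTheory Module

section Integrability

variable {E : Type*} [NormedAddCommGroup E] [NormedSpace ℝ E] [FiniteDimensional ℝ E]
  [MeasurableSpace E] [BorelSpace E] (μ : Measure E) [μ.IsAddHaarMeasure]

lemma min_one_inv_le_two_mul_inv_one_add {t : ℝ} (ht : 0 ≤ t) : min 1 t⁻¹ ≤ 2 * (1 + t)⁻¹ := by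
  rw [← div_eq_mul_inv, le_div_iff₀ (by positivity)]
  rcases le_total t 1 with h | h
  · calc min 1 t⁻¹ * (1 + t) ≤ 1 * (1 + t) := by gcongr; exact min_le_left _ _
      _ ≤ 2 := by linarith
  · have ht0 : 0 < t := by linarith
    calc min 1 t⁻¹ * (1 + t) ≤ t⁻¹ * (1 + t) := by gcongr; exact min_le_right _ _
      _ = t⁻¹ + 1 := by field_simp
      _ ≤ 2 := by linarith [inv_le_one_of_one_le₀ h]

lemma lintegral_min_one_inv_norm_pow_lt_top {k : ℕ} (hk : finrank ℝ E < k) :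
    ∫⁻ x, ENNReal.ofReal (min 1 ‖x‖⁻¹ ^ k) ∂μ < ⊤ := by
  have hbound (x : E) : ENNReal.ofReal (min 1 ‖x‖⁻¹ ^ k)
      ≤ ENNReal.ofReal (2 ^ k) * ENNReal.ofReal ((1 + ‖x‖) ^ (-(k : ℝ))) := by
    rw [← ENNReal.ofReal_mul (by positivity), Real.rpow_neg (by positivity), Real.rpow_natCast,
      ← inv_pow, ← mul_pow]
    exact ENNReal.ofReal_le_ofReal (pow_le_pow_left₀ (by positivity)
      (min_one_inv_le_two_mul_inv_one_add (norm_nonneg x)) k)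
  calc _ ≤ ∫⁻ x, ENNReal.ofReal (2 ^ k) * ENNReal.ofReal ((1 + ‖x‖) ^ (-(k : ℝ))) ∂μ :=
        lintegral_mono hbound
    _ = ENNReal.ofReal (2 ^ k) * ∫⁻ x, ENNReal.ofReal ((1 + ‖x‖) ^ (-(k : ℝ))) ∂μ :=
        lintegral_const_mul' _ _ ENNReal.ofReal_ne_top
    _ < ⊤ := ENNReal.mul_lt_top ENNReal.ofReal_lt_top
        (finite_integral_one_add_norm (by exact_mod_cast hk))

lemma setLIntegral_inv_norm_pow_lt_top {c : ℝ} (hc : 0 < c) {k : ℕ} (hk : finrank ℝ E < k) :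
    ∫⁻ x in {x | c < ‖x‖}, ENNReal.ofReal (‖x‖⁻¹ ^ k) ∂μ < ⊤ := by
  have hbound : ∀ x ∈ {x : E | c < ‖x‖}, ENNReal.ofReal (‖x‖⁻¹ ^ k)
      ≤ ENNReal.ofReal (max 1 c⁻¹ ^ k) * ENNReal.ofReal (min 1 ‖x‖⁻¹ ^ k) := by
    intro x (hx : c < ‖x‖)
    have hx0 : 0 < ‖x‖ := hc.trans hx
    rw [← ENNReal.ofReal_mul (by positivity), ← mul_pow]
    refine ENNReal.ofReal_le_ofReal (pow_le_pow_left₀ (by positivity) ?_ k)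
    rcases le_total ‖x‖ 1 with h | h
    · rw [min_eq_left (one_le_inv₀ hx0 |>.2 h), mul_one]
      exact le_max_of_le_right (inv_anti₀ hc hx.le)
    · rw [min_eq_right (inv_le_one_of_one_le₀ h)]
      exact le_mul_of_one_le_left (by positivity) (le_max_left _ _)
  calc _ ≤ ∫⁻ x in {x | c < ‖x‖},
        ENNReal.ofReal (max 1 c⁻¹ ^ k) * ENNReal.ofReal (min 1 ‖x‖⁻¹ ^ k) ∂μ :=
        setLIntegral_mono' (measurableSet_lt measurable_const measurable_norm) hbound
    _ ≤ ∫⁻ x, ENNReal.ofReal (max 1 c⁻¹ ^ k) * ENNReal.ofReal (min 1 ‖x‖⁻¹ ^ k) ∂μ :=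
        setLIntegral_le_lintegral _ _
    _ = ENNReal.ofReal (max 1 c⁻¹ ^ k) * ∫⁻ x, ENNReal.ofReal (min 1 ‖x‖⁻¹ ^ k) ∂μ :=
        lintegral_const_mul' _ _ ENNReal.ofReal_ne_top
    _ < ⊤ := ENNReal.mul_lt_top ENNReal.ofReal_lt_top (lintegral_min_one_inv_norm_pow_lt_top μ hk)

end Integrability

lemma setLIntegral_prod_fst_le {α β : Type*} [MeasurableSpace α] [MeasurableSpace β]
    {μ : Measure α} {ν : Measure β} {s : Set (α × β)} (hs : MeasurableSet s) (f : α → ENNReal) :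
    ∫⁻ p in s, f p.1 ∂μ.prod ν ≤ ∫⁻ a, f a * ν (Prod.mk a ⁻¹' s) ∂μ := by
  rw [← lintegral_indicator hs]
  refine (lintegral_prod_le _).trans (lintegral_mono fun a => ?_)
  calc ∫⁻ b, s.indicator (fun p => f p.1) (a, b) ∂ν
      = ∫⁻ b, (Prod.mk a ⁻¹' s).indicator (fun _ => f a) b ∂ν := rfl
    _ ≤ f a * ν (Prod.mk a ⁻¹' s) := lintegral_indicator_const_le _ _

section Potential

variable {ι : Type*} [Fintype ι]

def realCauchySchwarzDefect (b x : ι → ℝ) : ℝ :=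
  (∑ n, b n ^ 2) * (∑ n, x n ^ 2) - (∑ n, b n * x n) ^ 2

lemma realCauchySchwarzDefect_nonneg (b x : ι → ℝ) : 0 ≤ realCauchySchwarzDefect b x :=
  sub_nonneg.2 (Finset.sum_mul_sq_le_sq_mul_sq _ b x)

def cauchySchwarzDefect (b : ι → ℝ) (z : ι → ℂ) : ℝ :=
  (∑ n, b n ^ 2) * (∑ n, Complex.normSq (z n)) - Complex.normSq (∑ n, (b n : ℂ) * z n)

lemma sum_normSq_eq_re_add_im (z : ι → ℂ) :
    ∑ n, Complex.normSq (z n) = ∑ n, (z n).re ^ 2 + ∑ n, (z n).im ^ 2 := by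
  simp only [Complex.normSq_apply, ← sq, Finset.sum_add_distrib]

lemma cauchySchwarzDefect_eq_re_add_im (b : ι → ℝ) (z : ι → ℂ) :
    cauchySchwarzDefect b z = realCauchySchwarzDefect b (fun n => (z n).re)
      + realCauchySchwarzDefect b (fun n => (z n).im) := by
  have hre : (∑ n, (b n : ℂ) * z n).re = ∑ n, b n * (z n).re := by
    simp [Complex.re_sum, Complex.mul_re]
  have him : (∑ n, (b n : ℂ) * z n).im = ∑ n, b n * (z n).im := by
    simp [Complex.im_sum, Complex.mul_im]
  rw [cauchySchwarzDefect, realCauchySchwarzDefect, realCauchySchwarzDefect,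
    Complex.normSq_apply, hre, him, sum_normSq_eq_re_add_im]
  ring

lemma cauchySchwarzDefect_nonneg (b : ι → ℝ) (z : ι → ℂ) : 0 ≤ cauchySchwarzDefect b z := by
  rw [cauchySchwarzDefect_eq_re_add_im]
  exact add_nonneg (realCauchySchwarzDefect_nonneg b _) (realCauchySchwarzDefect_nonneg b _)

lemma cauchySchwarzDefect_inv_smul_smul (b : ι → ℝ) (z : ι → ℂ) {c : ℝ} (hc : c ≠ 0) :
    cauchySchwarzDefect (c⁻¹ • b) (c • z) = cauchySchwarzDefect b z := by
  have hsum : ∑ n, ((c⁻¹ * b n : ℝ) : ℂ) * (c * z n) = ∑ n, (b n : ℂ) * z n := by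
    refine Finset.sum_congr rfl fun n _ => ?_
    have hc' : (c : ℂ) ≠ 0 := by exact_mod_cast hc
    push_cast
    field_simp
  simp only [cauchySchwarzDefect, Pi.smul_apply, smul_eq_mul, Complex.real_smul, hsum,
    Complex.normSq_mul, Complex.normSq_ofReal, mul_pow, ← Finset.mul_sum]
  field_simp

lemma normSq_sum_sq_le (z : ι → ℂ) :
    Complex.normSq (∑ n, z n ^ 2) ≤ (∑ n, Complex.normSq (z n)) ^ 2 := by
  have h : ‖∑ n, z n ^ 2‖ ≤ ∑ n, Complex.normSq (z n) := by
    refine (norm_sum_le _ _).trans_eq (Finset.sum_congr rfl fun n _ => ?_)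
    rw [norm_pow, Complex.sq_norm]
  rw [← Complex.sq_norm]
  exact pow_le_pow_left₀ (norm_nonneg _) h 2

def bosonicPotential (a : ℝ) (b : ι → ℝ) (z : ι → ℂ) : ℝ :=
  8 * (a ^ 2 + ∑ n, (b n) ^ 2) * (∑ n, Complex.normSq (z n))
    - 8 * Complex.normSq (∑ n, (b n : ℂ) * z n)
    + 2 * ((∑ n, Complex.normSq (z n)) ^ 2 - Complex.normSq (∑ n, (z n) ^ 2))

lemma bosonicPotential_eq (a : ℝ) (b : ι → ℝ) (z : ι → ℂ) :
    bosonicPotential a b z = 8 * a ^ 2 * (∑ n, Complex.normSq (z n)) + 8 * cauchySchwarzDefect b z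
      + 2 * ((∑ n, Complex.normSq (z n)) ^ 2 - Complex.normSq (∑ n, (z n) ^ 2)) := by
  rw [bosonicPotential, cauchySchwarzDefect]
  ring

variable (ι) in
def valleyCore (r : ℝ) : Set ((ι → ℝ) × (ι → ℂ)) :=
  {q | ∑ n, Complex.normSq (q.2 n) ≤ r ∧ cauchySchwarzDefect q.1 q.2 ≤ r}

lemma inv_smul_smul_mem_valleyCore {a V₀ : ℝ} (ha : a ≠ 0) {b : ι → ℝ} {z : ι → ℂ}
    (hV : bosonicPotential a b z < V₀) : (a⁻¹ • b, a • z) ∈ valleyCore ι (V₀ / 8) := by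
  have hZ : 0 ≤ ∑ n, Complex.normSq (z n) := Finset.sum_nonneg fun n _ => Complex.normSq_nonneg _
  have hquartic := normSq_sum_sq_le z
  have hdefect := cauchySchwarzDefect_nonneg b z
  rw [bosonicPotential_eq] at hV
  refine ⟨?_, ?_⟩
  · have hscale : ∑ n, Complex.normSq ((a • z) n) = a ^ 2 * ∑ n, Complex.normSq (z n) := by
      simp [Complex.real_smul, Complex.normSq_mul, Finset.mul_sum, sq]
    rw [hscale]
    nlinarith
  · rw [cauchySchwarzDefect_inv_smul_smul b z ha]
    nlinarith [sq_nonneg a]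

end Potential

section Tubes

variable {ι : Type*} [Fintype ι]

lemma volume_tube_euclidean_le {u : EuclideanSpace ℝ ι} (hu : ‖u‖ = 1) (i₀ : ι) {R t : ℝ}
    (hR : 0 ≤ R) (ht : 0 ≤ t) :
    volume {x : EuclideanSpace ℝ ι | ‖x‖ ^ 2 ≤ R ^ 2 ∧ ‖x‖ ^ 2 - inner ℝ u x ^ 2 ≤ t ^ 2}
      ≤ ENNReal.ofReal (2 * R) * ENNReal.ofReal (2 * t) ^ (Fintype.card ι - 1) := by
  classical
  set e : EuclideanSpace ℝ ι := EuclideanSpace.single i₀ 1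
  -- the reflection exchanging `u` and `e` straightens the tube around `ℝ u` onto the `i₀`-axis
  set f := (ℝ ∙ (u - e))ᗮ.reflection
  have hfu : f u = e := Submodule.reflection_sub (by simp [e, hu])
  set r : ι → ℝ := Function.update (fun _ => t) i₀ R
  have hr_self : r i₀ = R := Function.update_self ..
  have hr_ne {i : ι} (hi : i ≠ i₀) : r i = t := Function.update_of_ne hi ..
  have hr (i : ι) : 0 ≤ r i := by
    rcases eq_or_ne i i₀ with rfl | hi
    · rwa [hr_self]
    · rwa [hr_ne hi]
  set box : Set (ι → ℝ) := Set.univ.pi fun i => Set.Icc (-r i) (r i)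
  have hbox : MeasurableSet box := MeasurableSet.univ_pi fun _ => measurableSet_Icc
  have hsub : {x : EuclideanSpace ℝ ι | ‖x‖ ^ 2 ≤ R ^ 2 ∧ ‖x‖ ^ 2 - inner ℝ u x ^ 2 ≤ t ^ 2}
      ⊆ f ⁻¹' (WithLp.ofLp ⁻¹' box) := by
    rintro x ⟨hxR, hxt⟩ i -
    have hinner : inner ℝ u x = f x i₀ := by
      rw [← f.inner_map_map, hfu, EuclideanSpace.inner_single_left]
      simp
    have hnorm : ‖x‖ ^ 2 = ∑ j, f x j ^ 2 := by rw [← f.norm_map, EuclideanSpace.real_norm_sq_eq]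
    rw [hnorm] at hxR hxt
    rw [hinner] at hxt
    have hsq : f x i ^ 2 ≤ r i ^ 2 := by
      rcases eq_or_ne i i₀ with rfl | hi
      · rw [hr_self]
        exact (Finset.single_le_sum (fun j _ => sq_nonneg (f x j)) (Finset.mem_univ i)).trans hxR
      · have hpair := Finset.sum_le_sum_of_subset_of_nonneg (Finset.subset_univ {i₀, i})
          fun j _ _ => sq_nonneg (f x j)
        rw [Finset.sum_pair hi.symm] at hpair
        rw [hr_ne hi]
        linarith
    exact abs_le_of_sq_le_sq' hsq (hr i)
  calc _ ≤ volume (f ⁻¹' (WithLp.ofLp ⁻¹' box)) := measure_mono hsub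
    _ = volume box := by
      rw [f.measurePreserving.measure_preimage
          ((PiLp.volume_preserving_ofLp ι).measurable hbox).nullMeasurableSet,
        (PiLp.volume_preserving_ofLp ι).measure_preimage hbox.nullMeasurableSet]
    _ = ∏ i, ENNReal.ofReal (2 * r i) := by
      simp only [box, volume_pi_pi, Real.volume_Icc, sub_neg_eq_add, two_mul]
    _ = _ := by
      rw [Fintype.prod_eq_mul_prod_compl i₀, hr_self, Finset.prod_congr rfl fun i hi =>
        by rw [hr_ne (Finset.notMem_singleton.1 (Finset.mem_compl.1 hi))],
        Finset.prod_const, Finset.card_compl, Finset.card_singleton]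


lemma volume_tube_real_le [Nonempty ι] {b : ι → ℝ} (hb : b ≠ 0) {R s : ℝ} (hR : 0 ≤ R)
    (hs : 0 ≤ s) :
    volume {x : ι → ℝ | ∑ i, x i ^ 2 ≤ R ^ 2 ∧ realCauchySchwarzDefect b x ≤ s ^ 2}
      ≤ ENNReal.ofReal (2 * R) * ENNReal.ofReal (2 * min R (s / ‖b‖)) ^ (Fintype.card ι - 1) := by
  obtain ⟨i₀⟩ := ‹Nonempty ι›
  set T := {x : ι → ℝ | ∑ i, x i ^ 2 ≤ R ^ 2 ∧ realCauchySchwarzDefect b x ≤ s ^ 2}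
  set β : EuclideanSpace ℝ ι := WithLp.toLp 2 b
  have hβ : 0 < ‖β‖ := norm_pos_iff.2 (by simpa [β] using hb)
  have hbβ : ‖b‖ ≤ ‖β‖ :=
    (pi_norm_le_iff_of_nonneg hβ.le).2 fun i => PiLp.norm_apply_le β i
  set t := min R (s / ‖β‖)
  have ht : 0 ≤ t := le_min hR (by positivity)
  have hsub : (MeasurableEquiv.toLp 2 (ι → ℝ)).symm ⁻¹' T
      ⊆ {x | ‖x‖ ^ 2 ≤ R ^ 2 ∧ ‖x‖ ^ 2 - inner ℝ (‖β‖⁻¹ • β) x ^ 2 ≤ t ^ 2} := by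
    rintro x ⟨hxR, hxs⟩
    have hnorm : ∑ i, x i ^ 2 = ‖x‖ ^ 2 := (EuclideanSpace.real_norm_sq_eq x).symm
    have hβnorm : ∑ i, b i ^ 2 = ‖β‖ ^ 2 := (EuclideanSpace.real_norm_sq_eq β).symm
    have hinner : ∑ i, b i * x i = inner ℝ β x := by simp [β, PiLp.inner_apply, mul_comm]
    simp only [realCauchySchwarzDefect, MeasurableEquiv.toLp_symm_apply, hnorm, hβnorm,
      hinner] at hxR hxs
    refine ⟨hxR, ?_⟩
    have hsmall : ‖x‖ ^ 2 - inner ℝ (‖β‖⁻¹ • β) x ^ 2 ≤ (s / ‖β‖) ^ 2 := by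
      rw [real_inner_smul_left, div_pow, le_div_iff₀ (by positivity)]
      field_simp
      linarith
    have hbig : ‖x‖ ^ 2 - inner ℝ (‖β‖⁻¹ • β) x ^ 2 ≤ R ^ 2 := by nlinarith
    rcases min_choice R (s / ‖β‖) with h | h <;> rw [show t = _ from h] <;> assumption
  rw [← (EuclideanSpace.volume_preserving_symm_measurableEquiv_toLp ι).measure_preimage_equiv]
  calc _ ≤ _ := measure_mono hsub
    _ ≤ ENNReal.ofReal (2 * R) * ENNReal.ofReal (2 * t) ^ (Fintype.card ι - 1) :=
        volume_tube_euclidean_le (by rw [norm_smul, norm_inv, norm_norm, inv_mul_cancel₀ hβ.ne'])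
          i₀ hR ht
    _ ≤ _ := by
        gcongr
        exact min_le_min le_rfl (div_le_div_of_nonneg_left hs (norm_pos_iff.2 hb) hbβ)

lemma volume_tube_complex_le [Nonempty ι] {b : ι → ℝ} (hb : b ≠ 0) {R s : ℝ} (hR : 0 ≤ R)
    (hs : 0 ≤ s) :
    volume {z : ι → ℂ | ∑ n, Complex.normSq (z n) ≤ R ^ 2 ∧ cauchySchwarzDefect b z ≤ s ^ 2}
      ≤ (ENNReal.ofReal (2 * R) * ENNReal.ofReal (2 * min R (s / ‖b‖)) ^ (Fintype.card ι - 1))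
          ^ 2 := by
  set A := {x : ι → ℝ | ∑ i, x i ^ 2 ≤ R ^ 2 ∧ realCauchySchwarzDefect b x ≤ s ^ 2}
  set φ : (ι → ℂ) ≃ᵐ (ι → ℝ) × (ι → ℝ) :=
    (MeasurableEquiv.piCongrRight fun _ => Complex.measurableEquivRealProd).trans
      (MeasurableEquiv.arrowProdEquivProdArrow ℝ ℝ ι)
  have hφ : MeasurePreserving φ :=
    (volume_measurePreserving_arrowProdEquivProdArrow ℝ ℝ ι).comp
      (volume_preserving_pi fun _ => Complex.volume_preserving_equiv_real_prod)
  have hsub : {z : ι → ℂ | ∑ n, Complex.normSq (z n) ≤ R ^ 2 ∧ cauchySchwarzDefect b z ≤ s ^ 2}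
      ⊆ φ ⁻¹' (A ×ˢ A) := by
    rintro z ⟨hzR, hzs⟩
    change (fun n => (z n).re, fun n => (z n).im) ∈ A ×ˢ A
    rw [sum_normSq_eq_re_add_im] at hzR
    rw [cauchySchwarzDefect_eq_re_add_im] at hzs
    have hre := realCauchySchwarzDefect_nonneg b fun n => (z n).re
    have him := realCauchySchwarzDefect_nonneg b fun n => (z n).im
    have hre' : 0 ≤ ∑ n, (z n).re ^ 2 := Finset.sum_nonneg fun n _ => sq_nonneg _
    have him' : 0 ≤ ∑ n, (z n).im ^ 2 := Finset.sum_nonneg fun n _ => sq_nonneg _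
    exact ⟨⟨by linarith, by linarith⟩, ⟨by linarith, by linarith⟩⟩
  calc _ ≤ volume (φ ⁻¹' (A ×ˢ A)) := measure_mono hsub
    _ = volume A * volume A := by
      rw [hφ.measure_preimage_equiv, Measure.volume_eq_prod, Measure.prod_prod]
    _ ≤ _ := by
      rw [sq]
      exact mul_le_mul' (volume_tube_real_le hb hR hs) (volume_tube_real_le hb hR hs)

lemma volume_valleyCore_lt_top (hι : 3 ≤ Fintype.card ι) (r : ℝ) :
    volume (valleyCore ι r) < ⊤ := by
  have : Nonempty ι := Fintype.card_pos_iff.1 (by omega)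
  set R := √r
  have hR : 0 ≤ R := Real.sqrt_nonneg r
  have hr : r ≤ R ^ 2 := Real.sq_sqrt' ▸ le_max_left r 0
  set C := (ENNReal.ofReal (2 * R) * ENNReal.ofReal (2 * R) ^ (Fintype.card ι - 1)) ^ 2
  have hC : C ≠ ⊤ := by finiteness
  have hslice : ∀ᵐ b : ι → ℝ, volume (Prod.mk b ⁻¹' valleyCore ι r)
      ≤ C * ENNReal.ofReal (min 1 ‖b‖⁻¹ ^ (2 * (Fintype.card ι - 1))) := by
    filter_upwards [measure_singleton (μ := (volume : Measure (ι → ℝ))) 0 |> compl_mem_ae_iff.2]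
      with b (hb : b ≠ 0)
    have hmin : min R (R / ‖b‖) = R * min 1 ‖b‖⁻¹ := by
      rw [mul_min_of_nonneg _ _ hR, mul_one, div_eq_mul_inv]
    calc _ ≤ volume {z : ι → ℂ | ∑ n, Complex.normSq (z n) ≤ R ^ 2
          ∧ cauchySchwarzDefect b z ≤ R ^ 2} :=
          measure_mono fun z hz => ⟨hz.1.trans hr, hz.2.trans hr⟩
      _ ≤ _ := volume_tube_complex_le hb hR hR
      _ = C * ENNReal.ofReal (min 1 ‖b‖⁻¹ ^ (2 * (Fintype.card ι - 1))) := by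
          rw [hmin, ← mul_assoc, ENNReal.ofReal_mul (p := 2 * R) (by positivity),
            ENNReal.ofReal_pow (by positivity)]
          ring
  have hK : MeasurableSet (valleyCore ι r) := by
    unfold valleyCore cauchySchwarzDefect
    measurability
  calc volume (valleyCore ι r) ≤ ∫⁻ b, volume (Prod.mk b ⁻¹' valleyCore ι r) :=
        Measure.prod_apply_le hK
    _ ≤ ∫⁻ b : ι → ℝ, C * ENNReal.ofReal (min 1 ‖b‖⁻¹ ^ (2 * (Fintype.card ι - 1))) :=
        lintegral_mono_ae hslice
    _ = C * ∫⁻ b : ι → ℝ, ENNReal.ofReal (min 1 ‖b‖⁻¹ ^ (2 * (Fintype.card ι - 1))) :=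
        lintegral_const_mul' _ _ hC
    _ < ⊤ := ENNReal.mul_lt_top hC.lt_top <| lintegral_min_one_inv_norm_pow_lt_top
        (volume : Measure (ι → ℝ)) (by rw [finrank_fintype_fun_eq_card]; omega)

end Tubes

section Rescaling

variable {ι : Type*} [Fintype ι]

noncomputable def gaugeRescaling (c : ℝ) : ((ι → ℝ) × (ι → ℂ)) →ₗ[ℝ] (ι → ℝ) × (ι → ℂ) :=
  (c⁻¹ • LinearMap.id).prodMap (c • LinearMap.id)

lemma det_gaugeRescaling {c : ℝ} (hc : c ≠ 0) :
    LinearMap.det (gaugeRescaling (ι := ι) c) = c ^ Fintype.card ι := by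
  have hrank : finrank ℝ (ι → ℂ) = 2 * Fintype.card ι := by
    simp [finrank_pi_fintype, Complex.finrank_real_complex, mul_comm]
  rw [gaugeRescaling, LinearMap.det_prodMap, LinearMap.det_smul, LinearMap.det_smul,
    LinearMap.det_id, LinearMap.det_id, finrank_fintype_fun_eq_card, hrank, pow_mul,
    mul_one, mul_one, ← mul_pow, sq, inv_mul_cancel_left₀ hc]

-- not found by instance search, which does not unfold `volume` on a product to `volume.prod volume`
instance : (volume : Measure ((ι → ℝ) × (ι → ℂ))).IsAddHaarMeasure :=
  Measure.prod.instIsAddHaarMeasure _ _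

lemma volume_preimage_gaugeRescaling {c : ℝ} (hc : c ≠ 0) (s : Set ((ι → ℝ) × (ι → ℂ))) :
    volume (gaugeRescaling c ⁻¹' s) = ENNReal.ofReal (|c| ^ Fintype.card ι)⁻¹ * volume s := by
  rw [Measure.addHaar_preimage_linearMap _ (by rw [det_gaugeRescaling hc]; positivity),
    det_gaugeRescaling hc, abs_inv, abs_pow]

lemma ofReal_sq_mul_volume_setOf_bosonicPotential_lt_le (hι : 2 ≤ Fintype.card ι) {a : ℝ}
    (ha : a ≠ 0) (V₀ : ℝ) :
    ENNReal.ofReal (a ^ 2) * volume {q : (ι → ℝ) × (ι → ℂ) | bosonicPotential a q.1 q.2 < V₀}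
      ≤ ENNReal.ofReal (‖a‖⁻¹ ^ (Fintype.card ι - 2)) * volume (valleyCore ι (V₀ / 8)) := by
  have hweight : a ^ 2 * (|a| ^ Fintype.card ι)⁻¹ = ‖a‖⁻¹ ^ (Fintype.card ι - 2) := by
    obtain ⟨j, hj⟩ : ∃ j, Fintype.card ι = j + 2 := ⟨_, (Nat.sub_add_cancel hι).symm⟩
    rw [hj, Nat.add_sub_cancel, Real.norm_eq_abs, ← sq_abs a, pow_add, inv_pow]
    field_simp
  calc _ ≤ ENNReal.ofReal (a ^ 2) * volume (gaugeRescaling a ⁻¹' valleyCore ι (V₀ / 8)) :=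
        by gcongr; exact fun q hq => inv_smul_smul_mem_valleyCore ha hq
    _ = _ := by
        rw [volume_preimage_gaugeRescaling ha, ← mul_assoc, ← ENNReal.ofReal_mul (sq_nonneg a),
          hweight]

end Rescaling

theorem su2_gauge_fixed_valley_weighted_integral_finite_general
    (d : ℕ) (hd : 5 ≤ d) (V₀ ε : ℝ) (hε : 0 < ε) :
    (∫⁻ p in {p : ℝ × (Fin (d - 1) → ℝ) × (Fin (d - 1) → ℂ) |
        (8 * (p.1 ^ 2 + ∑ n, (p.2.1 n) ^ 2) * (∑ n, Complex.normSq (p.2.2 n))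
          - 8 * Complex.normSq (∑ n, (p.2.1 n : ℂ) * p.2.2 n)
          + 2 * ((∑ n, Complex.normSq (p.2.2 n)) ^ 2
              - Complex.normSq (∑ n, (p.2.2 n) ^ 2))) < V₀
        ∧ ε < 2 * |p.1|},
      ENNReal.ofReal (p.1 ^ 2)) < ⊤ := by
  set S := {p : ℝ × (Fin (d - 1) → ℝ) × (Fin (d - 1) → ℂ) |
    bosonicPotential p.1 p.2.1 p.2.2 < V₀ ∧ ε < 2 * |p.1|}
  change ∫⁻ p in S, ENNReal.ofReal (p.1 ^ 2) < ⊤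
  have hS : MeasurableSet S := by
    unfold S bosonicPotential
    measurability
  set K := valleyCore (Fin (d - 1)) (V₀ / 8)
  have hK : volume K < ⊤ := volume_valleyCore_lt_top (by rw [Fintype.card_fin]; omega) _
  have hslice (a : ℝ) : ENNReal.ofReal (a ^ 2) * volume (Prod.mk a ⁻¹' S)
      ≤ {a : ℝ | ε / 2 < ‖a‖}.indicator
          (fun a => ENNReal.ofReal (‖a‖⁻¹ ^ (d - 1 - 2)) * volume K) a := by
    by_cases ha : ε / 2 < ‖a‖
    · rw [Set.indicator_of_mem (show a ∈ {a : ℝ | ε / 2 < ‖a‖} from ha)]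
      have hbound := ofReal_sq_mul_volume_setOf_bosonicPotential_lt_le
        (ι := Fin (d - 1)) (by rw [Fintype.card_fin]; omega) (norm_pos_iff.1 (by linarith)) V₀
      rw [Fintype.card_fin] at hbound
      refine le_trans ?_ hbound
      gcongr
      exact fun q hq => hq.1
    · have hempty : Prod.mk a ⁻¹' S = ∅ := Set.eq_empty_of_forall_notMem fun q hq =>
        ha (by rw [Real.norm_eq_abs]; linarith [hq.2])
      simp [hempty]
  calc ∫⁻ p in S, ENNReal.ofReal (p.1 ^ 2)
      ≤ ∫⁻ a, ENNReal.ofReal (a ^ 2) * volume (Prod.mk a ⁻¹' S) := setLIntegral_prod_fst_le hS _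
    _ ≤ ∫⁻ a in {a : ℝ | ε / 2 < ‖a‖}, ENNReal.ofReal (‖a‖⁻¹ ^ (d - 1 - 2)) * volume K := by
        rw [← lintegral_indicator (measurableSet_lt measurable_const measurable_norm)]
        exact lintegral_mono hslice
    _ = (∫⁻ a in {a : ℝ | ε / 2 < ‖a‖}, ENNReal.ofReal (‖a‖⁻¹ ^ (d - 1 - 2))) * volume K :=
        lintegral_mul_const' _ _ hK.ne
    _ < ⊤ := ENNReal.mul_lt_top (setLIntegral_inv_norm_pow_lt_top volume (by linarith)
        (by simp; omega)) hK

/-- For `d ≥ 5`, the integral of the Vandermonde weight `a²` over the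
gauge-fixed `su(2)` valley `{(a,b,z) : V_B(a,b,z) < V₀, 2|a| > ε}` is finite, where
`V_B(a,b,z) = 8(a²+‖b‖²)‖z‖² − 8|b·z|² + 2(‖z‖⁴ − |z·z|²)`. -/
theorem su2_gauge_fixed_valley_weighted_integral_finite
    (d : ℕ) (hd : 5 ≤ d) (V₀ ε : ℝ) (hV₀ : 0 < V₀) (hε : 0 < ε) :
    (∫⁻ p in {p : ℝ × (Fin (d - 1) → ℝ) × (Fin (d - 1) → ℂ) |
        (8 * (p.1 ^ 2 + ∑ n, (p.2.1 n) ^ 2) * (∑ n, Complex.normSq (p.2.2 n))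
          - 8 * Complex.normSq (∑ n, (p.2.1 n : ℂ) * p.2.2 n)
          + 2 * ((∑ n, Complex.normSq (p.2.2 n)) ^ 2
              - Complex.normSq (∑ n, (p.2.2 n) ^ 2))) < V₀
        ∧ ε < 2 * |p.1|},
      ENNReal.ofReal (p.1 ^ 2)) < ⊤ :=
  su2_gauge_fixed_valley_weighted_integral_finite_general d hd V₀ ε hε
end

section
/- Let N ≥ 2 be an integer, b₁,…,b_N real numbers, and T > 0. If Σ_{1≤i<j≤N} (b_i − b_j)² > T, then the number of pairs (i,j) with 1 ≤ i < j ≤ N and (b_i − b_j)² > T/(2N(N−1)) is at least N − 1. -/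
/-! Among the `N(N-1)/2` pairs `k < l` one has `(b k - b l)² > 4c`, where `c = T / (2N(N-1))`.
By the triangle inequality every index is then `c`-far, in squared distance, from `k` or from `l`,
so the graph joining `c`-far indices is connected and therefore has at least `N - 1` edges. -/

open Finset

theorem exists_lt_div_choose_two_of_lt_sum {α : Type*} [Fintype α] [LinearOrder α]
    (hα : 2 ≤ Fintype.card α) {f : α → α → ℝ} {T : ℝ}
    (h : T < ∑ i, ∑ j, if i < j then f i j else 0) :
    ∃ i j, i < j ∧ T / (Fintype.card α).choose 2 < f i j := by
  set P : Finset (α × α) := {p ∈ univ ×ˢ univ | p.1 < p.2}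
  have hP : (#P : ℝ) ≠ 0 := by
    rw [card_product_filter_lt, card_univ]
    exact_mod_cast (Nat.choose_pos hα).ne'
  have hsum : ∑ p ∈ P, T / #P < ∑ p ∈ P, f p.1 p.2 := by
    rw [sum_const, nsmul_eq_mul, mul_div_cancel₀ _ hP, sum_filter, sum_product]
    exact h
  obtain ⟨p, hp, hlt⟩ := exists_lt_of_sum_lt hsum
  rw [card_product_filter_lt, card_univ] at hlt
  exact ⟨p.1, p.2, (mem_filter.1 hp).2, hlt⟩

theorem lt_sq_sub_or_lt_sq_sub {c x y z : ℝ} (h : 4 * c < (x - z) ^ 2) :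
    c < (x - y) ^ 2 ∨ c < (y - z) ^ 2 := by
  by_contra! hle
  nlinarith [sq_nonneg (x - y - (y - z))]

def largeGapGraph {α : Type*} (b : α → ℝ) (c : ℝ) : SimpleGraph α where
  Adj i j := i ≠ j ∧ c < (b i - b j) ^ 2
  symm := ⟨fun i j h => ⟨h.1.symm, sub_sq_comm (b i) (b j) ▸ h.2⟩⟩
  loopless := ⟨fun _ h => h.1 rfl⟩

@[simp]
theorem largeGapGraph_adj {α : Type*} {b : α → ℝ} {c : ℝ} {i j : α} :
    (largeGapGraph b c).Adj i j ↔ i ≠ j ∧ c < (b i - b j) ^ 2 :=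
  Iff.rfl

namespace SimpleGraph

variable {V : Type*} {G : SimpleGraph V}

theorem connected_of_adj_of_forall_adj_or_adj {k l : V} (hkl : G.Adj k l)
    (h : ∀ i, i ≠ k → i ≠ l → G.Adj k i ∨ G.Adj i l) : G.Connected := by
  refine G.connected_iff_exists_forall_reachable.2 ⟨k, fun i => ?_⟩
  by_cases hik : i = k
  · exact hik ▸ Reachable.refl (G := G) k
  by_cases hil : i = l
  · exact hil ▸ hkl.reachable
  rcases h i hik hil with hki | hil
  · exact hki.reachable
  · exact hkl.reachable.trans hil.symm.reachable

theorem card_edgeFinset_eq_card_filter_lt [Fintype V] [LinearOrder V] [DecidableRel G.Adj] :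
    #G.edgeFinset = #{p : V × V | p.1 < p.2 ∧ G.Adj p.1 p.2} := by
  symm
  refine card_nbij' (fun p => s(p.1, p.2)) (fun e => (e.inf, e.sup)) ?_ ?_ ?_ ?_
  · rintro ⟨i, j⟩ hij
    simp only [coe_filter, Set.mem_ofPred_eq, mem_univ, true_and] at hij
    simpa using hij.2
  · intro e he
    induction e with | _ i j
    simp only [coe_edgeFinset, mem_edgeSet] at he
    rcases lt_or_gt_of_ne he.ne with hij | hji
    · simpa [hij.le] using ⟨hij, he⟩
    · simpa [hji.le] using ⟨hji, he.symm⟩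
  · rintro ⟨i, j⟩ hij
    simp only [coe_filter, Set.mem_ofPred_eq, mem_univ, true_and] at hij
    simp [hij.1.le]
  · intro e _
    exact Sym2.sortEquiv.symm_apply_apply e

theorem Connected.card_sub_one_le_card_filter_lt [Fintype V] [LinearOrder V] [DecidableRel G.Adj]
    (hG : G.Connected) : Fintype.card V - 1 ≤ #{p : V × V | p.1 < p.2 ∧ G.Adj p.1 p.2} := by
  have := hG.card_vert_le_card_edgeSet_add_one
  rw [← card_edgeFinset_eq_card_filter_lt, edgeFinset_card]
  rw [Nat.card_eq_fintype_card, Nat.card_eq_fintype_card] at this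
  omega

end SimpleGraph

theorem pigeonhole_pairs_general
    (N : ℕ) (hN : 2 ≤ N) (b : Fin N → ℝ) (T : ℝ)
    (h : T < ∑ i : Fin N, ∑ j : Fin N, if i < j then (b i - b j) ^ 2 else 0) :
    N - 1 ≤ (Finset.univ.filter (fun p : Fin N × Fin N =>
        p.1 < p.2 ∧ T / (2 * (N : ℝ) * ((N : ℝ) - 1)) < (b p.1 - b p.2) ^ 2)).card := by
  set c := T / (2 * (N : ℝ) * ((N : ℝ) - 1)) with hc
  obtain ⟨k, l, hkl, hbig⟩ := exists_lt_div_choose_two_of_lt_sum (by simpa using hN) h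
  have h4c : T / (Fintype.card (Fin N)).choose 2 = 4 * c := by
    rw [Fintype.card_fin, Nat.cast_choose_two, hc, mul_assoc 2]
    generalize (N : ℝ) * (N - 1) = m
    ring
  rw [h4c] at hbig
  have hconn : (largeGapGraph b c).Connected :=
    SimpleGraph.connected_of_adj_of_forall_adj_or_adj
      (largeGapGraph_adj.2 ⟨hkl.ne, by linarith [sq_nonneg (b k - b l)]⟩) fun i hik hil =>
        (lt_sq_sub_or_lt_sq_sub hbig).imp (fun hki => ⟨hik.symm, hki⟩) fun hil' => ⟨hil, hil'⟩
  classical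
  have := hconn.card_sub_one_le_card_filter_lt
  simp only [largeGapGraph_adj, Fintype.card_fin] at this
  rwa [filter_congr fun p _ => and_congr_right fun hp => and_iff_right hp.ne] at this

/-- If `∑_{i<j}(bᵢ-bⱼ)² > T`, then at least `N−1` pairs `i < j`
satisfy `(bᵢ-bⱼ)² > T/(2N(N−1))`. -/
theorem pigeonhole_pairs
    (N : ℕ) (hN : 2 ≤ N) (b : Fin N → ℝ) (T : ℝ) (hT : 0 < T)
    (h : T < ∑ i : Fin N, ∑ j : Fin N, if i < j then (b i - b j) ^ 2 else 0) :
    N - 1 ≤ (Finset.univ.filter (fun p : Fin N × Fin N =>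
        p.1 < p.2 ∧ T / (2 * (N : ℝ) * ((N : ℝ) - 1)) < (b p.1 - b p.2) ^ 2)).card :=
  pigeonhole_pairs_general N hN b T h
end
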